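/- For every integer k > 0, the set (F_n)_k can be partitioned into pairwise disjoint subsets such that, for each 0 ≤ j ≤ n, exactly binom(k + j − 1, j) of these subsets each admit a target-preserving bijection onto (F_n)_{0,j}. (This is the set-level content of the identification of the degree-k quantum line bundle L_k over the quantum complex projective space with the projective module given by the projection ⊞_{j=0}^{n} ⊞^{binom(k+j−1,j)} ((⊗^j P_1) ⊗ (⊗^{n−j} I)).) -/

import Mathlib

/-! Common setup for the groupoid `F_n` of the quantum sphere `S_q^{2n+1}`. -/

/-- `x_i + w_i ≥ 0` for all `i` (vacuous at coordinates where `w_i = ∞`). -/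
def okPos {n : ℕ} (x : Fin n → ℤ) (w : Fin n → ℕ∞) : Prop :=
  ∀ i, ∀ m : ℕ, w i = (m : ℕ∞) → 0 ≤ x i + (m : ℤ)

/-- The defining condition of `F̃_n`: whenever `w_i = ∞`,
`x_i = -z - x_1 - ⋯ - x_{i-1}` and `x_j = 0` for `j > i`. -/
def condF {n : ℕ} (z : ℤ) (x : Fin n → ℤ) (w : Fin n → ℕ∞) : Prop :=
  ∀ i, w i = ⊤ → (x i = -z - ∑ j ∈ Finset.Iio i, x j) ∧ (∀ j, i < j → x j = 0)

/-- The set `F̃_n` of admissible triples `(z, x, w)`. -/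
abbrev FTil (n : ℕ) : Type :=
  {p : ℤ × (Fin n → ℤ) × (Fin n → ℕ∞) // okPos p.2.1 p.2.2 ∧ condF p.1 p.2.1 p.2.2}

/-- `ν(w)`: keep coordinates before the first `∞`, replace all later ones by `∞`. -/
def qnu {n : ℕ} (w : Fin n → ℕ∞) : Fin n → ℕ∞ :=
  fun i => if ∃ j, j ≤ i ∧ w j = ⊤ then ⊤ else w i

/-- Addition of an integer to an extended natural number (`a + ∞ = ∞`). -/
def addZN (a : ℤ) (b : ℕ∞) : ℕ∞ :=
  if b = ⊤ then ⊤ else (((a + (b.toNat : ℤ)).toNat : ℕ) : ℕ∞)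

/-- Coordinatewise sum `x + w`. -/
def addxw {n : ℕ} (x : Fin n → ℤ) (w : Fin n → ℕ∞) : Fin n → ℕ∞ :=
  fun i => addZN (x i) (w i)

/-- The relation `(z, x, w) ∼ (z', x', w')` iff `z = z'`, `x = x'`, `ν(w) = ν(w')`. -/
def FRel {n : ℕ} (a b : FTil n) : Prop :=
  a.val.1 = b.val.1 ∧ a.val.2.1 = b.val.2.1 ∧ qnu a.val.2.2 = qnu b.val.2.2

instance FSetoid (n : ℕ) : Setoid (FTil n) where
  r := FRel
  iseqv := ⟨fun _ => ⟨rfl, rfl, rfl⟩, fun h => ⟨h.1.symm, h.2.1.symm, h.2.2.symm⟩,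
    fun h1 h2 => ⟨h1.1.trans h2.1, h1.2.1.trans h2.2.1, h1.2.2.trans h2.2.2⟩⟩

/-- The groupoid `F_n = F̃_n / ∼`. -/
abbrev Fgpd (n : ℕ) : Type := Quotient (FSetoid n)

/-- The `z`-component of a class in `F_n`. -/
def qzp {n : ℕ} (g : Fgpd n) : ℤ :=
  Quotient.lift (fun a : FTil n => a.val.1) (fun a b h => (h : FRel a b).1) g

/-- The `x`-component of a class in `F_n`. -/
def qxp {n : ℕ} (g : Fgpd n) : Fin n → ℤ :=
  Quotient.lift (fun a : FTil n => a.val.2.1) (fun a b h => (h : FRel a b).2.1) g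

/-- The source `ν(w)` of a class in `F_n`. -/
def qsrc {n : ℕ} (g : Fgpd n) : Fin n → ℕ∞ :=
  Quotient.lift (fun a : FTil n => qnu a.val.2.2) (fun a b h => (h : FRel a b).2.2) g

/-- The target `ν(x + w)` of a class in `F_n` (computed on a representative). -/
noncomputable def qtgt {n : ℕ} (g : Fgpd n) : Fin n → ℕ∞ :=
  qnu (addxw g.out.val.2.1 g.out.val.2.2)

/-- `qIsMul g h p` states that the product `g · h` is defined and equals `p`:
the source of `g` equals the target of `h`, and `p = [(z + z', x + x', w')]`
(a class in `F_n` is determined by its `z`-, `x`-components and its source). -/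
def qIsMul {n : ℕ} (g h p : Fgpd n) : Prop :=
  qsrc g = qtgt h ∧ qzp p = qzp g + qzp h ∧
    (∀ i, qxp p i = qxp g i + qxp h i) ∧ qsrc p = qsrc h

/-- The subset `(F_n)_{k,j}` of classes of degree `k` whose source vanishes in the
first `j` coordinates. -/
def Fkj (n : ℕ) (k : ℤ) (j : ℕ) : Set (Fgpd n) :=
  {g : Fgpd n | qzp g = k ∧ ∀ i : Fin n, (i : ℕ) < j → qsrc g i = 0}

/-!
A class of `F_n` is determined by its degree `z`, its `x`-component and its source `s`, and its
target is `x + s`. Raising the degree by `c`, subtracting `δ ∈ ℤ^n` from `x` and adding it to `s`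
therefore preserves the target; the result lies in `F_n` as long as, at every infinite source
coordinate, `δ` has summed up to `c` and vanishes afterwards, and the shift by `(-c, -δ)` undoes it
as long as `s + δ` needs no truncation.

Sort `g ∈ (F_n)_k` by the first index `j` at which the partial sums of its source reach `k`
(`j = n` if they never do) and by its source entries `a ∈ ℕ^j` before that index, which sum to less
than `k`. The shift by `(-k, -(a, k - ∑ a, 0, …, 0))` maps this piece bijectively onto
`(F_n)_{0,j}`, and by stars and bars there are `binom(k + j - 1, j)` such `a`.
-/

open Finset

section AddZN

@[simp]
lemma addZN_top (a : ℤ) : addZN a ⊤ = ⊤ := if_pos rfl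

@[simp]
lemma addZN_coe (a : ℤ) (m : ℕ) : addZN a m = ((a + m).toNat : ℕ∞) := by
  simp [addZN]

@[simp]
lemma addZN_zero_right (a : ℤ) : addZN a 0 = (a.toNat : ℕ∞) := by
  simpa using addZN_coe a 0

@[simp]
lemma addZN_eq_top_iff {a : ℤ} {b : ℕ∞} : addZN a b = ⊤ ↔ b = ⊤ := by
  induction b using ENat.recTopCoe <;> simp

lemma addZN_addZN {d : ℤ} {b : ℕ∞} (hb : ∀ m : ℕ, b = m → 0 ≤ d + m) (e : ℤ) :
    addZN e (addZN d b) = addZN (e + d) b := by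
  induction b using ENat.recTopCoe with
  | top => simp
  | coe m =>
    have := hb m rfl
    simp only [addZN_coe, Nat.cast_inj]
    omega

@[simp]
lemma addZN_zero (b : ℕ∞) : addZN 0 b = b := by
  induction b using ENat.recTopCoe <;> simp

lemma coe_le_addZN (m : ℕ) (b : ℕ∞) : (m : ℕ∞) ≤ addZN m b := by
  induction b using ENat.recTopCoe with
  | top => simp
  | coe b => simp only [addZN_coe, Nat.cast_le]; omega

end AddZN

variable {n : ℕ}

lemma qnu_eq_top_iff {w : Fin n → ℕ∞} {i : Fin n} : qnu w i = ⊤ ↔ ∃ j ≤ i, w j = ⊤ := by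
  unfold qnu
  split_ifs with h
  · simpa using h
  · exact iff_of_false (fun hw => h ⟨i, le_rfl, hw⟩) h

lemma qnu_addxw (x : Fin n → ℤ) (w : Fin n → ℕ∞) : qnu (addxw x w) = addxw x (qnu w) := by
  funext i
  simp only [qnu, addxw, addZN_eq_top_iff]
  split_ifs <;> simp

lemma Fgpd.ext {g h : Fgpd n} (hz : qzp g = qzp h) (hx : qxp g = qxp h) (hs : qsrc g = qsrc h) :
    g = h := by
  induction g using Quotient.ind
  induction h using Quotient.ind
  exact Quotient.sound ⟨hz, hx, hs⟩

lemma qtgt_eq (g : Fgpd n) : qtgt g = addxw (qxp g) (qsrc g) := by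
  conv_rhs => rw [← Quotient.out_eq g]
  exact qnu_addxw _ _

/-- The shift `(z, x, w) ↦ (z + c, x - δ, w + δ)` keeps the defining condition of `F̃_n` at a
coordinate `i` with `w_i = ∞` exactly when `δ` sums to `c` up to `i` and vanishes after it. -/
def ShiftCompatible (c : ℤ) (δ : Fin n → ℤ) (s : Fin n → ℕ∞) : Prop :=
  ∀ i, s i = ⊤ → ∑ l ∈ Iic i, δ l = c ∧ ∀ l, i < l → δ l = 0

lemma ShiftCompatible.neg {c : ℤ} {δ : Fin n → ℤ} {s : Fin n → ℕ∞}
    (h : ShiftCompatible c δ s) : ShiftCompatible (-c) (-δ) s := fun i hi => by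
  obtain ⟨hsum, hzero⟩ := h i hi
  exact ⟨by simp [hsum], fun l hl => by simp [hzero l hl]⟩

lemma shiftCompatible_addxw_iff {c : ℤ} {δ e : Fin n → ℤ} {s : Fin n → ℕ∞} :
    ShiftCompatible c δ (addxw e s) ↔ ShiftCompatible c δ s := by
  simp only [ShiftCompatible, addxw, addZN_eq_top_iff]

lemma okPos_shift {x δ : Fin n → ℤ} {w : Fin n → ℕ∞} (h : okPos x w) :
    okPos (x - δ) (addxw δ w) := by
  intro i m hm
  induction hw : w i using ENat.recTopCoe with
  | top => simp [addxw, hw] at hm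
  | coe b =>
    have := h i b hw
    simp only [addxw, hw, addZN_coe, Nat.cast_inj] at hm
    simp only [Pi.sub_apply]
    omega

lemma condF_shift {z c : ℤ} {x δ : Fin n → ℤ} {w : Fin n → ℕ∞} (h : condF z x w)
    (hc : ShiftCompatible c δ (qnu w)) : condF (z + c) (x - δ) (addxw δ w) := by
  intro i hi
  rw [addxw, addZN_eq_top_iff] at hi
  obtain ⟨hxi, hx0⟩ := h i hi
  obtain ⟨hsum, hδ0⟩ := hc i (qnu_eq_top_iff.2 ⟨i, le_rfl, hi⟩)
  rw [← sum_Iio_add_eq_sum_Iic] at hsum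
  refine ⟨?_, fun l hl => by simp [hx0 l hl, hδ0 l hl]⟩
  simp only [Pi.sub_apply, sum_sub_distrib]
  linarith

open Classical in
/-- The identity where the shift would leave `F̃_n`. -/
noncomputable def FTil.shift (c : ℤ) (δ : Fin n → ℤ) (a : FTil n) : FTil n :=
  if hc : ShiftCompatible c δ (qnu a.val.2.2) then
    ⟨(a.val.1 + c, a.val.2.1 - δ, addxw δ a.val.2.2), okPos_shift a.2.1, condF_shift a.2.2 hc⟩
  else a

lemma FTil.shift_rel (c : ℤ) (δ : Fin n → ℤ) {a b : FTil n} (hab : a ≈ b) :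
    a.shift c δ ≈ b.shift c δ := by
  obtain ⟨hz, hx, hw⟩ := hab
  unfold FTil.shift
  by_cases hc : ShiftCompatible c δ (qnu a.val.2.2)
  · rw [dif_pos hc, dif_pos (hw ▸ hc)]
    exact ⟨by simp [hz], by simp [hx], by simp only [qnu_addxw, hw]⟩
  · rw [dif_neg hc, dif_neg (hw ▸ hc)]
    exact ⟨hz, hx, hw⟩

noncomputable def Fgpd.shift (c : ℤ) (δ : Fin n → ℤ) : Fgpd n → Fgpd n :=
  Quotient.map (FTil.shift c δ) fun _ _ => FTil.shift_rel c δ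

section Shift

variable {c : ℤ} {δ : Fin n → ℤ} {g : Fgpd n}

lemma Fgpd.shift_mk {a : FTil n} (hc : ShiftCompatible c δ (qnu a.val.2.2)) :
    Fgpd.shift c δ ⟦a⟧ = ⟦⟨(a.val.1 + c, a.val.2.1 - δ, addxw δ a.val.2.2),
      okPos_shift a.2.1, condF_shift a.2.2 hc⟩⟧ := by
  simp only [Fgpd.shift, Quotient.map_mk, FTil.shift, dif_pos hc]

lemma qzp_shift (hc : ShiftCompatible c δ (qsrc g)) : qzp (Fgpd.shift c δ g) = qzp g + c := by
  induction g using Quotient.ind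
  rw [Fgpd.shift_mk hc]
  rfl

lemma qxp_shift (hc : ShiftCompatible c δ (qsrc g)) : qxp (Fgpd.shift c δ g) = qxp g - δ := by
  induction g using Quotient.ind
  rw [Fgpd.shift_mk hc]
  rfl

lemma qsrc_shift (hc : ShiftCompatible c δ (qsrc g)) :
    qsrc (Fgpd.shift c δ g) = addxw δ (qsrc g) := by
  induction g using Quotient.ind
  rw [Fgpd.shift_mk hc]
  exact qnu_addxw _ _

lemma qtgt_shift (hc : ShiftCompatible c δ (qsrc g))
    (hδ : ∀ i (m : ℕ), qsrc g i = m → 0 ≤ δ i + m) : qtgt (Fgpd.shift c δ g) = qtgt g := by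
  funext i
  rw [qtgt_eq, qtgt_eq, qxp_shift hc, qsrc_shift hc]
  simp only [addxw, Pi.sub_apply, addZN_addZN (hδ i), sub_add_cancel]

lemma shift_neg_shift (hc : ShiftCompatible c δ (qsrc g))
    (hδ : ∀ i (m : ℕ), qsrc g i = m → 0 ≤ δ i + m) :
    Fgpd.shift (-c) (-δ) (Fgpd.shift c δ g) = g := by
  have hc' : ShiftCompatible (-c) (-δ) (qsrc (Fgpd.shift c δ g)) := by
    rw [qsrc_shift hc, shiftCompatible_addxw_iff]
    exact hc.neg
  refine Fgpd.ext ?_ ?_ ?_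
  · rw [qzp_shift hc', qzp_shift hc, add_neg_cancel_right]
  · rw [qxp_shift hc', qxp_shift hc, sub_neg_eq_add, sub_add_cancel]
  · funext i
    rw [qsrc_shift hc', qsrc_shift hc]
    simp only [addxw, Pi.neg_apply, addZN_addZN (hδ i), neg_add_cancel, addZN_zero]

end Shift

lemma Fin.sum_Iic_eq_sum_range {M : Type*} [AddCommMonoid M] (f : ℕ → M) (i : Fin n) :
    ∑ l ∈ Iic i, f l = ∑ l ∈ range (i + 1), f l := by
  rw [Nat.range_succ_eq_Iic, ← Fin.map_valEmbedding_Iic, sum_map]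
  rfl

/-- Padding the source with `∞` beyond the last coordinate lets the level `j = n` be treated like
the others. -/
def srcSeq (g : Fgpd n) (l : ℕ) : ℕ∞ :=
  if h : l < n then qsrc g ⟨l, h⟩ else ⊤

lemma srcSeq_of_lt (g : Fgpd n) {l : ℕ} (hl : l < n) : srcSeq g l = qsrc g ⟨l, hl⟩ := dif_pos hl

lemma srcSeq_val (g : Fgpd n) (i : Fin n) : srcSeq g i = qsrc g i := dif_pos i.2

lemma srcSeq_of_le (g : Fgpd n) {l : ℕ} (hl : n ≤ l) : srcSeq g l = ⊤ := dif_neg hl.not_gt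

section Pieces

variable {k j : ℕ}

def pieceShift (k : ℕ) (a : Fin j → ℕ) (l : ℕ) : ℕ :=
  if h : l < j then a ⟨l, h⟩ else if l = j then k - ∑ i, a i else 0

lemma pieceShift_val (a : Fin j → ℕ) (i : Fin j) : pieceShift k a i = a i := by
  simp [pieceShift]

lemma pieceShift_self (a : Fin j → ℕ) : pieceShift k a j = k - ∑ i, a i := by
  simp [pieceShift]

lemma pieceShift_of_lt (a : Fin j → ℕ) {l : ℕ} (hl : j < l) : pieceShift k a l = 0 := by
  simp [pieceShift, hl.not_gt, hl.ne']

lemma sum_range_pieceShift_le (a : Fin j → ℕ) {m : ℕ} (hm : m ≤ j) :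
    ∑ l ∈ range m, pieceShift k a l ≤ ∑ i, a i := calc
  _ ≤ ∑ l ∈ range j, pieceShift k a l := sum_le_sum_of_subset (range_subset_range.2 hm)
  _ = ∑ i, a i := by rw [sum_range]; simp only [pieceShift_val]

lemma sum_range_pieceShift_of_lt {a : Fin j → ℕ} (ha : ∑ i, a i ≤ k) {m : ℕ} (hm : j < m) :
    ∑ l ∈ range m, pieceShift k a l = k := by
  induction m, hm using Nat.le_induction with
  | base =>
    rw [sum_range_succ, pieceShift_self,
      le_antisymm (sum_range_pieceShift_le a le_rfl) (by rw [sum_range]; simp [pieceShift_val])]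
    omega
  | succ m hm ih => rw [sum_range_succ, ih, pieceShift_of_lt a hm, add_zero]

def pieceVec (n k : ℕ) (a : Fin j → ℕ) (i : Fin n) : ℤ := pieceShift k a i

lemma shiftCompatible_pieceVec {a : Fin j → ℕ} (ha : ∑ i, a i < k) {s : Fin n → ℕ∞}
    (hs : ∀ i : Fin n, (i : ℕ) < j → s i ≠ ⊤) :
    ShiftCompatible k (pieceVec n k a) s := by
  intro i hi
  have hji : j ≤ i := not_lt.1 fun h => hs i h hi
  refine ⟨?_, fun l hl => by simp [pieceVec, pieceShift_of_lt a (hji.trans_lt hl)]⟩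
  change ∑ l ∈ Iic i, ((pieceShift k a l : ℕ) : ℤ) = k
  rw [Fin.sum_Iic_eq_sum_range (fun l => (pieceShift k a l : ℤ)), ← Nat.cast_sum,
    sum_range_pieceShift_of_lt ha.le (Nat.lt_succ_of_le hji)]

def piece (n k : ℕ) (a : Fin j → ℕ) : Set (Fgpd n) :=
  {g | qzp g = k ∧ ∀ l, (l < j → srcSeq g l = pieceShift k a l) ∧ pieceShift k a l ≤ srcSeq g l}

variable {a : Fin j → ℕ} {g : Fgpd n}

lemma qsrc_of_mem_piece (hg : g ∈ piece n k a) {i : Fin n} (hi : (i : ℕ) < j) :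
    qsrc g i = pieceShift k a i := by
  rw [← srcSeq_val, (hg.2 i).1 hi]

lemma pieceShift_le_qsrc (hg : g ∈ piece n k a) (i : Fin n) : pieceShift k a i ≤ qsrc g i := by
  rw [← srcSeq_val]
  exact (hg.2 i).2

lemma shiftCompatible_of_mem_piece (ha : ∑ i, a i < k) (hg : g ∈ piece n k a) :
    ShiftCompatible (-k) (-pieceVec n k a) (qsrc g) :=
  (shiftCompatible_pieceVec ha fun i hi => by simp [qsrc_of_mem_piece hg hi]).neg

lemma shiftCompatible_of_mem_Fkj (ha : ∑ i, a i < k) (hg : g ∈ Fkj n 0 j) :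
    ShiftCompatible k (pieceVec n k a) (qsrc g) :=
  shiftCompatible_pieceVec ha fun i hi => by simp [hg.2 i hi]

lemma neg_pieceShift_add_nonneg (hg : g ∈ piece n k a) (i : Fin n) (m : ℕ) (hm : qsrc g i = m) :
    0 ≤ -(pieceShift k a i : ℤ) + m := by
  have := pieceShift_le_qsrc hg i
  rw [hm, Nat.cast_le] at this
  omega

lemma shift_mem_Fkj (ha : ∑ i, a i < k) (hg : g ∈ piece n k a) :
    Fgpd.shift (-k) (-pieceVec n k a) g ∈ Fkj n 0 j := by
  have hc := shiftCompatible_of_mem_piece ha hg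
  refine ⟨by rw [qzp_shift hc, hg.1, add_neg_cancel], fun i hi => ?_⟩
  rw [qsrc_shift hc, addxw, qsrc_of_mem_piece hg hi]
  simp [pieceVec]

lemma shift_mem_piece (ha : ∑ i, a i < k) (hj : j ≤ n) (hg : g ∈ Fkj n 0 j) :
    Fgpd.shift k (pieceVec n k a) g ∈ piece n k a := by
  have hc := shiftCompatible_of_mem_Fkj ha hg
  refine ⟨by rw [qzp_shift hc, hg.1, zero_add], fun l => ?_⟩
  by_cases hl : l < n
  · have hsrc : srcSeq (Fgpd.shift k (pieceVec n k a) g) l =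
        addZN (pieceShift k a l) (qsrc g ⟨l, hl⟩) := by
      rw [srcSeq_of_lt _ hl, qsrc_shift hc]
      rfl
    rw [hsrc]
    exact ⟨fun hlj => by simp [hg.2 ⟨l, hl⟩ hlj], coe_le_addZN _ _⟩
  · rw [srcSeq_of_le _ (not_lt.1 hl)]
    exact ⟨fun hlj => absurd (hlj.trans_le hj) hl, le_top⟩

lemma bijOn_shift_piece (ha : ∑ i, a i < k) (hj : j ≤ n) :
    Set.BijOn (Fgpd.shift (-k) (-pieceVec n k a)) (piece n k a) (Fkj n 0 j) := by
  refine Set.InvOn.bijOn (f' := Fgpd.shift k (pieceVec n k a)) ⟨fun g hg => ?_,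
    fun g hg => ?_⟩ (fun g hg => shift_mem_Fkj ha hg) (fun g hg => shift_mem_piece ha hj hg)
  · simpa using shift_neg_shift (shiftCompatible_of_mem_piece ha hg)
      (neg_pieceShift_add_nonneg hg)
  · exact shift_neg_shift (shiftCompatible_of_mem_Fkj ha hg) fun i m _ => by
      unfold pieceVec
      positivity

lemma qtgt_shift_of_mem_piece (ha : ∑ i, a i < k) (hg : g ∈ piece n k a) :
    qtgt (Fgpd.shift (-k) (-pieceVec n k a) g) = qtgt g :=
  qtgt_shift (shiftCompatible_of_mem_piece ha hg) (neg_pieceShift_add_nonneg hg)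

end Pieces

section Partition

variable {k j : ℕ} {a : Fin j → ℕ} {g : Fgpd n}

lemma le_sum_srcSeq_iff (ha : ∑ i, a i < k) (hg : g ∈ piece n k a) (m : ℕ) :
    (k : ℕ∞) ≤ ∑ l ∈ range (m + 1), srcSeq g l ↔ j ≤ m := by
  constructor
  · intro hk
    by_contra! hmj
    have hsum : ∑ l ∈ range (m + 1), srcSeq g l = ∑ l ∈ range (m + 1), (pieceShift k a l : ℕ∞) :=
      sum_congr rfl fun l hl => (hg.2 l).1 ((mem_range.1 hl).trans_le hmj)
    rw [hsum, ← Nat.cast_sum, Nat.cast_le] at hk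
    exact (hk.trans (sum_range_pieceShift_le a hmj)).not_gt ha
  · intro hjm
    calc (k : ℕ∞) = ∑ l ∈ range (m + 1), (pieceShift k a l : ℕ∞) := by
          rw [← Nat.cast_sum, sum_range_pieceShift_of_lt ha.le (Nat.lt_succ_of_le hjm)]
      _ ≤ ∑ l ∈ range (m + 1), srcSeq g l := sum_le_sum fun l _ => (hg.2 l).2

lemma sigma_eq_of_mem_piece {j' : ℕ} {a' : Fin j' → ℕ} (ha : ∑ i, a i < k)
    (ha' : ∑ i, a' i < k) (hg : g ∈ piece n k a) (hg' : g ∈ piece n k a') :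
    (⟨j, a⟩ : Σ j, Fin j → ℕ) = ⟨j', a'⟩ := by
  obtain rfl : j = j' := le_antisymm
    ((le_sum_srcSeq_iff ha hg j').1 ((le_sum_srcSeq_iff ha' hg' j').2 le_rfl))
    ((le_sum_srcSeq_iff ha' hg' j).1 ((le_sum_srcSeq_iff ha hg j).2 le_rfl))
  congr
  funext i
  have h := (hg.2 i).1 i.2
  rw [(hg'.2 i).1 i.2, pieceShift_val, pieceShift_val, Nat.cast_inj] at h
  exact h.symm

lemma exists_mem_piece (hk : 0 < k) (hg : qzp g = k) :
    ∃ j ≤ n, ∃ a : Fin j → ℕ, ∑ i, a i < k ∧ g ∈ piece n k a := by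
  have htop : (k : ℕ∞) ≤ ∑ l ∈ range (n + 1), srcSeq g l := by
    rw [sum_range_succ, srcSeq_of_le g le_rfl, add_top]
    exact le_top
  have hex : ∃ m, (k : ℕ∞) ≤ ∑ l ∈ range (m + 1), srcSeq g l := ⟨n, htop⟩
  set j := Nat.find hex
  have hfin : ∀ l < j, srcSeq g l ≠ ⊤ := fun l hl hl_top => Nat.find_min hex hl <| by
    rw [sum_range_succ, hl_top, add_top]
    exact le_top
  have hbelow : ∑ l ∈ range j, srcSeq g l < k := by
    rcases Nat.eq_zero_or_eq_succ_pred j with h0 | hsucc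
    · rw [h0, sum_range_zero]
      exact_mod_cast hk
    · rw [hsucc]
      exact not_le.1 (Nat.find_min hex (Nat.pred_lt_self (by omega)))
  set a : Fin j → ℕ := fun i => (srcSeq g i).toNat
  have hsum : (∑ i, a i : ℕ) = ∑ l ∈ range j, srcSeq g l := by
    rw [sum_range, Nat.cast_sum]
    exact sum_congr rfl fun i _ => ENat.natCast_toNat (hfin i i.2)
  refine ⟨j, Nat.find_min' hex htop, a, by exact_mod_cast hsum ▸ hbelow, hg, fun l => ?_⟩
  rcases lt_trichotomy l j with hl | rfl | hl
  · have hl' : pieceShift k a l = a ⟨l, hl⟩ := pieceShift_val a ⟨l, hl⟩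
    have heq : srcSeq g l = pieceShift k a l := by
      rw [hl']
      exact (ENat.natCast_toNat (hfin l hl)).symm
    exact ⟨fun _ => heq, heq.ge⟩
  · refine ⟨fun h => absurd h (lt_irrefl _), ?_⟩
    have hreach := Nat.find_spec hex
    rw [sum_range_succ, ← hsum] at hreach
    rw [pieceShift_self, ENat.natCast_sub, tsub_le_iff_left]
    exact hreach
  · exact ⟨fun h => absurd h hl.not_gt, by simp [pieceShift_of_lt a hl]⟩

end Partition

def sumLeEquivSumEq (j m : ℕ) :
    {a : Fin j → ℕ // ∑ i, a i ≤ m} ≃ {b : Fin (j + 1) → ℕ // ∑ i, b i = m} where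
  toFun a := ⟨Fin.snoc a.1 (m - ∑ i, a.1 i), by simp [Fin.sum_univ_castSucc, a.2]⟩
  invFun b := ⟨Fin.init b.1, by
    have := b.2
    rw [Fin.sum_univ_castSucc] at this
    simp only [Fin.init]
    omega⟩
  left_inv a := by simp
  right_inv b := by
    ext1
    conv_rhs => rw [← Fin.snoc_init_self b.1]
    have := b.2
    rw [Fin.sum_univ_castSucc] at this
    simp only [Fin.init] at this ⊢
    congr 1
    omega

noncomputable def sumLtEquivFin (k j : ℕ) (hk : 0 < k) :
    {a : Fin j → ℕ // ∑ i, a i < k} ≃ Fin ((k + j - 1).choose j) :=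
  (Equiv.subtypeEquivRight fun a => by omega).trans <| (sumLeEquivSumEq j (k - 1)).trans <|
    (Sym.equivNatSumOfFintype _ _).symm.trans <| Fintype.equivFinOfCardEq <| by
      rw [Sym.card_sym_eq_choose, Fintype.card_fin,
        show j + 1 + (k - 1) - 1 = (k - 1) + j by omega, Nat.choose_symm_add,
        show k - 1 + j = k + j - 1 by omega]

theorem stmt19_general (n : ℕ) (k : ℕ) (hk : 0 < k) :
    ∃ A : ℕ × ℕ → Set (Fgpd n),
      (∀ q q' : ℕ × ℕ,
        (q.1 ≤ n ∧ q.2 < Nat.choose (k + q.1 - 1) q.1) →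
        (q'.1 ≤ n ∧ q'.2 < Nat.choose (k + q'.1 - 1) q'.1) → q ≠ q' →
        Disjoint (A q) (A q')) ∧
      (⋃ q ∈ {q : ℕ × ℕ | q.1 ≤ n ∧ q.2 < Nat.choose (k + q.1 - 1) q.1}, A q) =
        {g : Fgpd n | qzp g = (k : ℤ)} ∧
      (∀ j c : ℕ, j ≤ n → c < Nat.choose (k + j - 1) j →
        ∃ φ : Fgpd n → Fgpd n, Set.BijOn φ (A (j, c)) (Fkj n 0 j) ∧
          ∀ g ∈ A (j, c), qtgt (φ g) = qtgt g) := by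
  let E j := sumLtEquivFin k j hk
  refine ⟨fun q => if hq : q.2 < (k + q.1 - 1).choose q.1
    then piece n k ((E q.1).symm ⟨q.2, hq⟩).1 else ∅, ?_, ?_, ?_⟩
  · rintro ⟨j, c⟩ ⟨j', c'⟩ ⟨-, hc⟩ ⟨-, hc'⟩ hne
    simp only [dif_pos hc, dif_pos hc']
    refine Set.disjoint_left.2 fun g hg hg' => hne ?_
    obtain ⟨rfl, h⟩ := Sigma.mk.inj_iff.1 <|
      sigma_eq_of_mem_piece ((E j).symm _).2 ((E j').symm _).2 hg hg'
    have := (E j).symm.injective (Subtype.ext (eq_of_heq h))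
    rw [Fin.mk.injEq] at this
    rw [this]
  · ext g
    simp only [Set.mem_iUnion, Set.mem_ofPred_eq]
    constructor
    · rintro ⟨q, hq, hg⟩
      rw [dif_pos hq.2] at hg
      exact hg.1
    · intro hg
      obtain ⟨j, hj, a, ha, hga⟩ := exists_mem_piece hk hg
      refine ⟨(j, E j ⟨a, ha⟩), ⟨hj, (E j ⟨a, ha⟩).2⟩, ?_⟩
      simpa [dif_pos (E j ⟨a, ha⟩).2] using hga
  · intro j c hj hc
    simp only [dif_pos hc]
    exact ⟨_, bijOn_shift_piece ((E j).symm _).2 hj,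
      fun g hg => qtgt_shift_of_mem_piece ((E j).symm _).2 hg⟩

/-- For `k > 0`, the set `(F_n)_k` can be partitioned into pairwise
disjoint subsets such that for each `0 ≤ j ≤ n`, exactly `binom(k + j - 1, j)` of them
each admit a target-preserving bijection onto `(F_n)_{0,j}`.  (This is the set-level
content of the identification of the degree-`k` quantum line bundle `L_k` over
`ℂP_q^n` with the projective module given by the projection
`⊞_{j=0}^n ⊞^{binom(k+j-1,j)} ((⊗^j P₁) ⊗ (⊗^{n-j} I))`.) -/
theorem stmt19 (n : ℕ) (hn : 1 ≤ n) (k : ℕ) (hk : 0 < k) :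
    ∃ A : ℕ × ℕ → Set (Fgpd n),
      (∀ q q' : ℕ × ℕ,
        (q.1 ≤ n ∧ q.2 < Nat.choose (k + q.1 - 1) q.1) →
        (q'.1 ≤ n ∧ q'.2 < Nat.choose (k + q'.1 - 1) q'.1) → q ≠ q' →
        Disjoint (A q) (A q')) ∧
      (⋃ q ∈ {q : ℕ × ℕ | q.1 ≤ n ∧ q.2 < Nat.choose (k + q.1 - 1) q.1}, A q) =
        {g : Fgpd n | qzp g = (k : ℤ)} ∧
      (∀ j c : ℕ, j ≤ n → c < Nat.choose (k + j - 1) j →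
        ∃ φ : Fgpd n → Fgpd n, Set.BijOn φ (A (j, c)) (Fkj n 0 j) ∧
          ∀ g ∈ A (j, c), qtgt (φ g) = qtgt g) :=
  stmt19_general n k hk
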